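/- (Perfect distinguishability at the exceptional point.) Let ρ = |ψ⁺⟩⟨ψ⁺| be the maximally entangled two-qubit state (the Werner state ρ_W(1)) and take α = π/2. Then Bob's normalized reduced states corresponding to Alice's two operations are (Tr_A ρ₊)/Re(trace ρ₊) = (1/2)•!![1, Complex.I; −Complex.I, 1] (the projector onto |−_y⟩ = (|0⟩ − i|1⟩)/√2) and (Tr_A ρ₋)/Re(trace ρ₋) = (1/2)•!![1, −Complex.I; Complex.I, 1] (the projector onto |+_y⟩ = (|0⟩ + i|1⟩)/√2); these are orthogonal rank-one projections and their trace distance T equals 1, so Bob can distinguish Alice's operations perfectly. -/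

import Mathlib

open Matrix Kronecker Complex
open scoped ComplexOrder

noncomputable section

/-- Pauli matrix `σx`. -/
def σx : Matrix (Fin 2) (Fin 2) ℂ := !![0, 1; 1, 0]

/-- Pauli matrix `σy`. -/
def σy : Matrix (Fin 2) (Fin 2) ℂ := !![0, -Complex.I; Complex.I, 0]

/-- Pauli matrix `σz`. -/
def σz : Matrix (Fin 2) (Fin 2) ℂ := !![1, 0; 0, -1]

/-- The simulated PT-symmetric evolution operator at the chosen time. -/
def Upt (α : ℝ) : Matrix (Fin 2) (Fin 2) ℂ :=
  !![(Real.sin α : ℂ), -Complex.I; -Complex.I, -(Real.sin α : ℂ)]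

/-- Alice's operation `A₊` (do nothing). -/
def Apos : Matrix (Fin 2) (Fin 2) ℂ := 1

/-- Alice's operation `A₋` (bit flip `σx`). -/
def Aneg : Matrix (Fin 2) (Fin 2) ℂ := σx

/-- Unnormalized post-selected state after Alice applies `A₊` followed by the
simulated PT evolution. -/
def postPlus (α : ℝ) (ρ : Matrix (Fin 2 × Fin 2) (Fin 2 × Fin 2) ℂ) :
    Matrix (Fin 2 × Fin 2) (Fin 2 × Fin 2) ℂ :=
  ((Upt α * Apos) ⊗ₖ (1 : Matrix (Fin 2) (Fin 2) ℂ)) * ρ *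
    ((Upt α * Apos) ⊗ₖ (1 : Matrix (Fin 2) (Fin 2) ℂ))ᴴ

/-- Unnormalized post-selected state after Alice applies `A₋` followed by the
simulated PT evolution. -/
def postMinus (α : ℝ) (ρ : Matrix (Fin 2 × Fin 2) (Fin 2 × Fin 2) ℂ) :
    Matrix (Fin 2 × Fin 2) (Fin 2 × Fin 2) ℂ :=
  ((Upt α * Aneg) ⊗ₖ (1 : Matrix (Fin 2) (Fin 2) ℂ)) * ρ *
    ((Upt α * Aneg) ⊗ₖ (1 : Matrix (Fin 2) (Fin 2) ℂ))ᴴ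

/-- Probability that Bob obtains outcome `Π` given Alice applied `A₊`. -/
def Pplus (α : ℝ) (ρ : Matrix (Fin 2 × Fin 2) (Fin 2 × Fin 2) ℂ)
    (Pi : Matrix (Fin 2) (Fin 2) ℂ) : ℝ :=
  ((((1 : Matrix (Fin 2) (Fin 2) ℂ) ⊗ₖ Pi) * postPlus α ρ).trace).re /
    ((postPlus α ρ).trace).re

/-- Probability that Bob obtains outcome `Π` given Alice applied `A₋`. -/
def Pminus (α : ℝ) (ρ : Matrix (Fin 2 × Fin 2) (Fin 2 × Fin 2) ℂ)
    (Pi : Matrix (Fin 2) (Fin 2) ℂ) : ℝ :=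
  ((((1 : Matrix (Fin 2) (Fin 2) ℂ) ⊗ₖ Pi) * postMinus α ρ).trace).re /
    ((postMinus α ρ).trace).re

/-- Bob's `σy`-measurement projector onto `|+_y⟩ = (|0⟩ + i|1⟩)/√2`. -/
def Piy : Matrix (Fin 2) (Fin 2) ℂ :=
  (1/2 : ℂ) • !![1, -Complex.I; Complex.I, 1]

/-- Bob's rank-one projector `Π(z,u)` for an arbitrary projective measurement. -/
def Pizu (z u : ℝ) : Matrix (Fin 2) (Fin 2) ℂ :=
  !![((Real.cos (z/2))^2 : ℂ),
     (Real.cos (z/2) : ℂ) * (Real.sin (z/2) : ℂ) * Complex.exp (-(Complex.I * u));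
     (Real.cos (z/2) : ℂ) * (Real.sin (z/2) : ℂ) * Complex.exp (Complex.I * u),
     ((Real.sin (z/2))^2 : ℂ)]

/-- The single-qubit state `|+⟩ = (|0⟩ + |1⟩)/√2`. -/
def ketPlus : Fin 2 → ℂ := ![((1 / Real.sqrt 2 : ℝ) : ℂ), ((1 / Real.sqrt 2 : ℝ) : ℂ)]

/-- The single-qubit state `|−⟩ = (|0⟩ − |1⟩)/√2`. -/
def ketMinus : Fin 2 → ℂ := ![((1 / Real.sqrt 2 : ℝ) : ℂ), ((-(1 / Real.sqrt 2) : ℝ) : ℂ)]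

/-- The (normalized) pure state `|ψ_{β,γ}⟩ = (β|++⟩ + γ|−−⟩)/√(β²+γ²)`. -/
def ψpure (β γ : ℝ) : Fin 2 × Fin 2 → ℂ := fun q =>
  ((β : ℂ) * (ketPlus q.1 * ketPlus q.2) + (γ : ℂ) * (ketMinus q.1 * ketMinus q.2)) /
    ((Real.sqrt (β^2 + γ^2) : ℝ) : ℂ)

/-- The pure two-qubit density matrix `ρ_{β,γ} = |ψ_{β,γ}⟩⟨ψ_{β,γ}|`. -/
def ρpure (β γ : ℝ) : Matrix (Fin 2 × Fin 2) (Fin 2 × Fin 2) ℂ :=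
  Matrix.vecMulVec (ψpure β γ) (fun q => starRingEnd ℂ (ψpure β γ q))

/-- The maximally entangled state `|ψ⁺⟩ = (|00⟩ + |11⟩)/√2`. -/
def ψmax : Fin 2 × Fin 2 → ℂ := fun q =>
  if q.1 = q.2 then ((1 / Real.sqrt 2 : ℝ) : ℂ) else 0

/-- The two-qubit Werner state `ρ_W(p) = p |ψ⁺⟩⟨ψ⁺| + ((1-p)/4) 1`. -/
def ρWerner (p : ℝ) : Matrix (Fin 2 × Fin 2) (Fin 2 × Fin 2) ℂ :=
  (p : ℂ) • Matrix.vecMulVec ψmax (fun q => starRingEnd ℂ (ψmax q)) +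
    (((1 - p) / 4 : ℝ) : ℂ) • 1

/-- The canonical two-qubit state with magnetizations `mx my mz` (Alice),
`nx ny nz` (Bob) and diagonal correlators `Cxx Cyy Czz`. -/
def ρcan (mx my mz nx ny nz Cxx Cyy Czz : ℝ) :
    Matrix (Fin 2 × Fin 2) (Fin 2 × Fin 2) ℂ :=
  (1/4 : ℂ) • ((1 : Matrix (Fin 2 × Fin 2) (Fin 2 × Fin 2) ℂ)
    + (mx : ℂ) • (σx ⊗ₖ (1 : Matrix (Fin 2) (Fin 2) ℂ))
    + (my : ℂ) • (σy ⊗ₖ (1 : Matrix (Fin 2) (Fin 2) ℂ))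
    + (mz : ℂ) • (σz ⊗ₖ (1 : Matrix (Fin 2) (Fin 2) ℂ))
    + (nx : ℂ) • ((1 : Matrix (Fin 2) (Fin 2) ℂ) ⊗ₖ σx)
    + (ny : ℂ) • ((1 : Matrix (Fin 2) (Fin 2) ℂ) ⊗ₖ σy)
    + (nz : ℂ) • ((1 : Matrix (Fin 2) (Fin 2) ℂ) ⊗ₖ σz)
    + (Cxx : ℂ) • (σx ⊗ₖ σx)
    + (Cyy : ℂ) • (σy ⊗ₖ σy)
    + (Czz : ℂ) • (σz ⊗ₖ σz))

/-- Bob's reduced matrix: the partial trace over Alice's subsystem. -/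
def ptraceA (X : Matrix (Fin 2 × Fin 2) (Fin 2 × Fin 2) ℂ) :
    Matrix (Fin 2) (Fin 2) ℂ :=
  Matrix.of fun i j => ∑ k : Fin 2, X (k, i) (k, j)

/-- The trace distance `T(A,B) = (1/2) tr √((A-B)ᴴ (A-B))`, where the square
root is the positive semidefinite square root. -/
def traceDist (A B : Matrix (Fin 2) (Fin 2) ℂ) : ℝ :=
  (1/2) * (((Matrix.posSemidef_conjTranspose_mul_self (A - B)).1.eigenvectorUnitary.1 *
    Matrix.diagonal ((RCLike.ofReal : ℝ → ℂ) ∘ (fun x => Real.sqrt x) ∘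
      (Matrix.posSemidef_conjTranspose_mul_self (A - B)).1.eigenvalues) *
    (star (Matrix.posSemidef_conjTranspose_mul_self (A - B)).1.eigenvectorUnitary :
      Matrix (Fin 2) (Fin 2) ℂ)).trace).re

/-!
For any `M`, Bob's reduced matrix of `(M ⊗ 1)|ψ⁺⟩⟨ψ⁺|(M ⊗ 1)ᴴ` is `(Mᴴ M)ᵀ / 2`, because
`(M ⊗ 1)|ψ⁺⟩` is the vectorization of `M / √2`. At `α = π/2` this equals `1 ∓ σy` for
`A₊ = 1` and `A₋ = σx`, so Bob's normalized states are the spectral projections `(1 ∓ σy)/2`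
of `σy`. Since `σy` is a traceless Hermitian involution they are orthogonal projections of
trace, hence rank, one, and their difference `-σy` is unitary, so `|P₊ - P₋| = 1` and the
trace distance is `tr 1 / 2 = 1`.
-/

section HalfSum

variable {A : Type*} [Ring A] [Algebra ℂ A] {S : A}

lemma isIdempotentElem_half_smul_one_add (hS : S * S = 1) :
    IsIdempotentElem ((1/2 : ℂ) • (1 + S)) := by
  rw [IsIdempotentElem, smul_mul_smul_comm]
  simp only [add_mul, mul_add, hS, one_mul, mul_one]
  module

lemma half_smul_one_add_neg_mul_half_smul_one_add (hS : S * S = 1) :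
    ((1/2 : ℂ) • (1 + -S)) * ((1/2 : ℂ) • (1 + S)) = 0 := by
  rw [smul_mul_smul_comm]
  simp only [add_mul, neg_mul, mul_add, hS, one_mul, mul_one]
  module

lemma isSelfAdjoint_half_smul_one_add [StarRing A] [StarModule ℂ A] (hS : IsSelfAdjoint S) :
    IsSelfAdjoint ((1/2 : ℂ) • (1 + S)) :=
  IsSelfAdjoint.smul (by simp [IsSelfAdjoint]) ((IsSelfAdjoint.one A).add hS)

end HalfSum

lemma Matrix.rank_eq_trace_of_isIdempotentElem {n K : Type*} [Fintype n] [DecidableEq n]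
    [Field K] {P : Matrix n n K} (hP : IsIdempotentElem P) : (P.rank : K) = P.trace := by
  have hP' : IsIdempotentElem P.mulVecLin := by
    rw [IsIdempotentElem, Module.End.mul_eq_comp, ← Matrix.mulVecLin_mul, hP]
  rw [Matrix.rank, ← (LinearMap.IsIdempotentElem.isProj_range _ hP').trace]
  exact Matrix.trace_toLin'_eq P

lemma traceDist_eq_half_re_trace_cfc_sqrt (A B : Matrix (Fin 2) (Fin 2) ℂ) :
    traceDist A B = 1/2 * (cfc Real.sqrt ((A - B)ᴴ * (A - B))).trace.re := by
  rw [IsHermitian.cfc_eq (posSemidef_conjTranspose_mul_self (A - B)).1]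
  rfl

lemma traceDist_eq_one_of_conjTranspose_mul_self_eq_one {A B : Matrix (Fin 2) (Fin 2) ℂ}
    (h : (A - B)ᴴ * (A - B) = 1) : traceDist A B = 1 := by
  rw [traceDist_eq_half_re_trace_cfc_sqrt, h, cfc_apply_one]
  simp

lemma trace_ptraceA (X : Matrix (Fin 2 × Fin 2) (Fin 2 × Fin 2) ℂ) :
    (ptraceA X).trace = X.trace := by
  simp only [trace, diag, ptraceA, of_apply, Fintype.sum_prod_type]
  exact Finset.sum_comm

lemma mul_vecMulVec_star_mul_conjTranspose {m n α : Type*} [Fintype n] [CommSemiring α]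
    [StarRing α] (A : Matrix m n α) (v : n → α) :
    A * vecMulVec v (star v) * Aᴴ = vecMulVec (A *ᵥ v) (star (A *ᵥ v)) := by
  rw [mul_vecMulVec, vecMulVec_mul, star_mulVec]

lemma kronecker_one_mulVec_ψmax (M : Matrix (Fin 2) (Fin 2) ℂ) :
    (M ⊗ₖ (1 : Matrix (Fin 2) (Fin 2) ℂ)) *ᵥ ψmax = fun q => M q.1 q.2 / (Real.sqrt 2 : ℂ) := by
  ext ⟨i, j⟩
  fin_cases i <;> fin_cases j <;>
    simp [mulVec, dotProduct, Fintype.sum_prod_type, Fin.sum_univ_two, ψmax, div_eq_mul_inv]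

lemma ptraceA_conj_kronecker_one_ψmax (M : Matrix (Fin 2) (Fin 2) ℂ) :
    ptraceA ((M ⊗ₖ (1 : Matrix (Fin 2) (Fin 2) ℂ)) *
        vecMulVec ψmax (fun q => starRingEnd ℂ (ψmax q)) *
        (M ⊗ₖ (1 : Matrix (Fin 2) (Fin 2) ℂ))ᴴ) = (1/2 : ℂ) • (Mᴴ * M)ᵀ := by
  rw [show (fun q => starRingEnd ℂ (ψmax q)) = star ψmax from rfl,
    mul_vecMulVec_star_mul_conjTranspose, kronecker_one_mulVec_ψmax]
  ext i j
  simp only [ptraceA, of_apply, vecMulVec_apply, Pi.star_apply, Matrix.smul_apply, transpose_apply,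
    mul_apply, conjTranspose_apply, star_div₀, Complex.star_def, Complex.conj_ofReal, smul_eq_mul,
    Finset.mul_sum]
  refine Finset.sum_congr rfl fun k _ => ?_
  rw [div_mul_div_comm, ← Complex.ofReal_mul, Real.mul_self_sqrt zero_le_two]
  push_cast
  ring

lemma σy_mul_self : σy * σy = 1 := by
  ext i j; fin_cases i <;> fin_cases j <;> simp [σy]

lemma isSelfAdjoint_σy : IsSelfAdjoint σy := by
  ext i j; fin_cases i <;> fin_cases j <;> simp [σy]

lemma trace_σy : σy.trace = 0 := by
  simp [σy, trace_fin_two]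

lemma rank_half_smul_one_add {S : Matrix (Fin 2) (Fin 2) ℂ} (hS : S * S = 1)
    (htr : S.trace = 0) : ((1/2 : ℂ) • (1 + S)).rank = 1 := by
  have htrace : ((1/2 : ℂ) • (1 + S)).trace = 1 := by
    rw [trace_smul, trace_add, htr, trace_one]; norm_num
  exact_mod_cast (rank_eq_trace_of_isIdempotentElem (isIdempotentElem_half_smul_one_add hS)).trans
    htrace

lemma Upt_pi_div_two : Upt (Real.pi / 2) = !![1, -I; -I, -1] := by
  simp [Upt]

lemma ptraceA_postPlus_pi_div_two :
    ptraceA (postPlus (Real.pi / 2) (vecMulVec ψmax (fun q => starRingEnd ℂ (ψmax q)))) =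
      1 + -σy := by
  rw [postPlus, ptraceA_conj_kronecker_one_ψmax, Upt_pi_div_two, Apos, mul_one]
  ext i j; fin_cases i <;> fin_cases j <;> simp [σy, mul_apply, Fin.sum_univ_two] <;> ring

lemma ptraceA_postMinus_pi_div_two :
    ptraceA (postMinus (Real.pi / 2) (vecMulVec ψmax (fun q => starRingEnd ℂ (ψmax q)))) =
      1 + σy := by
  rw [postMinus, ptraceA_conj_kronecker_one_ψmax, Upt_pi_div_two, Aneg, σx]
  ext i j; fin_cases i <;> fin_cases j <;> simp [σy, mul_apply, Fin.sum_univ_two] <;> ring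

def bobState (X : Matrix (Fin 2 × Fin 2) (Fin 2 × Fin 2) ℂ) : Matrix (Fin 2) (Fin 2) ℂ :=
  (X.trace.re)⁻¹ • ptraceA X

lemma bobState_eq_half_smul_one_add {X : Matrix (Fin 2 × Fin 2) (Fin 2 × Fin 2) ℂ}
    {S : Matrix (Fin 2) (Fin 2) ℂ} (hX : ptraceA X = 1 + S) (hS : S.trace = 0) :
    bobState X = (1/2 : ℂ) • (1 + S) := by
  have htr : X.trace = 2 := by
    rw [← trace_ptraceA, hX, trace_add, hS, trace_one]; norm_num
  rw [bobState, htr, hX, ← Complex.coe_smul]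
  norm_num

/-- Perfect distinguishability at the exceptional point: for the maximally
entangled shared state and `α = π/2`, Bob's normalized reduced states for
Alice's two operations are the orthogonal rank-one projectors onto `|−_y⟩` and
`|+_y⟩`, and their trace distance is `1`. -/
theorem stmt18 (α : ℝ) (hα : α = Real.pi / 2)
    (ρ : Matrix (Fin 2 × Fin 2) (Fin 2 × Fin 2) ℂ)
    (hρ : ρ = Matrix.vecMulVec ψmax (fun q => starRingEnd ℂ (ψmax q)))
    (Bplus Bminus : Matrix (Fin 2) (Fin 2) ℂ)
    (hBplus : Bplus = (((postPlus α ρ).trace).re)⁻¹ • ptraceA (postPlus α ρ))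
    (hBminus : Bminus = (((postMinus α ρ).trace).re)⁻¹ • ptraceA (postMinus α ρ)) :
    Bplus = (1/2 : ℂ) • !![1, Complex.I; -Complex.I, 1] ∧
    Bminus = (1/2 : ℂ) • !![1, -Complex.I; Complex.I, 1] ∧
    Bplus * Bplus = Bplus ∧ Bplusᴴ = Bplus ∧ Bminus * Bminus = Bminus ∧ Bminusᴴ = Bminus ∧
    Bplus * Bminus = 0 ∧ Bplus.rank = 1 ∧ Bminus.rank = 1 ∧
    traceDist Bplus Bminus = 1 := by
  subst hα hρ
  have hneg_mul_self : -σy * -σy = 1 := by rw [neg_mul_neg, σy_mul_self]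
  have hneg_trace : (-σy).trace = 0 := by rw [trace_neg, trace_σy, neg_zero]
  obtain rfl : Bplus = (1/2 : ℂ) • (1 + -σy) :=
    hBplus.trans (bobState_eq_half_smul_one_add ptraceA_postPlus_pi_div_two hneg_trace)
  obtain rfl : Bminus = (1/2 : ℂ) • (1 + σy) :=
    hBminus.trans (bobState_eq_half_smul_one_add ptraceA_postMinus_pi_div_two trace_σy)
  refine ⟨?_, ?_, isIdempotentElem_half_smul_one_add hneg_mul_self,
    isSelfAdjoint_half_smul_one_add isSelfAdjoint_σy.neg,
    isIdempotentElem_half_smul_one_add σy_mul_self,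
    isSelfAdjoint_half_smul_one_add isSelfAdjoint_σy,
    half_smul_one_add_neg_mul_half_smul_one_add σy_mul_self,
    rank_half_smul_one_add hneg_mul_self hneg_trace, rank_half_smul_one_add σy_mul_self trace_σy,
    traceDist_eq_one_of_conjTranspose_mul_self_eq_one ?_⟩
  · ext i j; fin_cases i <;> fin_cases j <;> simp [σy]
  · ext i j; fin_cases i <;> fin_cases j <;> simp [σy]
  · rw [show (1/2 : ℂ) • (1 + -σy) - (1/2 : ℂ) • (1 + σy) = -σy by module, conjTranspose_neg,
      neg_mul_neg, ← star_eq_conjTranspose, isSelfAdjoint_σy.star_eq, σy_mul_self]
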